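/- Let q ∈ ℂ with |q| < 1, h ∈ ℤ, and for a d-periodic χ : ℕ → ℂ (d odd) define E_{n,χ,q}^{(h,1)}(x) = 2 ∑_{m=0}^∞ χ(m) q^{(h−1)m} (−1)^m [m+x]_q^n (convergent when |q^{h−1}| ≤ 1, e.g. h ≥ 1). Then E_{n,χ,q}^{(h,1)}(x) = (2/(1−q)^n) ∑_{a=0}^{d−1} χ(a)(−1)^a ∑_{l=0}^n C(n,l)(−1)^l q^{l(x+a)+ (h−1)a} / (1 + q^{(h−1)d + ld}). -/

import Mathlib

/-!
Expanding `[m + x]_q ^ n` binomially turns the series into a finite combination of series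
`∑ χ m * w ^ m` with `w = -q ^ (h - 1 + l)`, `‖w‖ ≤ 1`. For `‖w‖ < 1`, shifting by one period
gives `S = P w + w ^ d * S`, so `S = P w / (1 - w ^ d)` with `P w = ∑_{a<d} χ a * w ^ a`.
This rational function of `w` is continuous wherever `w ^ d ≠ 1`, which holds at `w = -q ^ k`
because `d` is odd, and its value there is the Abel sum.
-/

open Filter Finset

/-- Abel summation: `HasAbelSum a S` means `∑ a(m) r^m → S` as `r → 1⁻`. -/
def HasAbelSum (a : ℕ → ℂ) (S : ℂ) : Prop :=
  Tendsto (fun r : ℝ => ∑' m : ℕ, a m * (r : ℂ) ^ m) (nhdsWithin 1 (Set.Iio 1)) (nhds S)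

lemma norm_mul_ofReal_lt_one {w : ℂ} (hw : ‖w‖ ≤ 1) {r : ℝ} (hr : r ∈ Set.Ioo 0 1) :
    ‖w * r‖ < 1 := by
  rw [norm_mul, Complex.norm_real, Real.norm_of_nonneg hr.1.le]
  exact mul_lt_one_of_nonneg_of_lt_one_right hw hr.1.le hr.2

section Periodic

variable {χ : ℕ → ℂ} {d : ℕ}

lemma Function.Periodic.norm_le_sum_range (hχ : Function.Periodic χ d) (hd : 0 < d) (m : ℕ) :
    ‖χ m‖ ≤ ∑ a ∈ range d, ‖χ a‖ := by
  rw [← hχ.map_mod_nat m]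
  exact single_le_sum (f := fun a => ‖χ a‖) (fun a _ => norm_nonneg _)
    (mem_range.mpr (Nat.mod_lt m hd))

lemma summable_periodic_mul_pow (hχ : Function.Periodic χ d) (hd : 0 < d) {z : ℂ}
    (hz : ‖z‖ < 1) : Summable fun m => χ m * z ^ m := by
  refine Summable.of_norm_bounded
    ((summable_geometric_of_lt_one (norm_nonneg z) hz).mul_left (∑ a ∈ range d, ‖χ a‖))
    fun m => ?_
  rw [norm_mul, norm_pow]
  gcongr
  exact hχ.norm_le_sum_range hd m

lemma tsum_periodic_mul_pow (hχ : Function.Periodic χ d) (hd : 0 < d) {z : ℂ}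
    (hz : ‖z‖ < 1) :
    ∑' m, χ m * z ^ m = (∑ a ∈ range d, χ a * z ^ a) / (1 - z ^ d) := by
  have hzd : z ^ d ≠ 1 := fun h => by
    simpa [← norm_pow, h] using pow_lt_one₀ (norm_nonneg z) hz hd.ne'
  rw [eq_div_iff (sub_ne_zero.mpr hzd.symm)]
  have hsplit := (summable_periodic_mul_pow hχ hd hz).sum_add_tsum_nat_add d
  have hshift : ∀ m, χ (m + d) * z ^ (m + d) = z ^ d * (χ m * z ^ m) := fun m => by
    rw [hχ m, pow_add]; ring
  simp only [hshift, tsum_mul_left] at hsplit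
  linear_combination -hsplit

lemma hasAbelSum_periodic_mul_pow (hχ : Function.Periodic χ d) (hd : 0 < d) {w : ℂ}
    (hw : ‖w‖ ≤ 1) (hwd : w ^ d ≠ 1) :
    HasAbelSum (fun m => χ m * w ^ m) ((∑ a ∈ range d, χ a * w ^ a) / (1 - w ^ d)) := by
  have hcont : Tendsto (fun r : ℝ => (∑ a ∈ range d, χ a * (w * r) ^ a) / (1 - (w * r) ^ d))
      (nhds 1) (nhds ((∑ a ∈ range d, χ a * w ^ a) / (1 - w ^ d))) := by
    have : ContinuousAt
        (fun r : ℝ => (∑ a ∈ range d, χ a * (w * r) ^ a) / (1 - (w * r) ^ d)) 1 := by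
      refine ContinuousAt.div (by fun_prop) (by fun_prop) ?_
      simpa using sub_ne_zero.mpr hwd.symm
    simpa using this.tendsto
  refine (hcont.mono_left nhdsWithin_le_nhds).congr' ?_
  filter_upwards [Ioo_mem_nhdsLT zero_lt_one] with r hr
  rw [← tsum_periodic_mul_pow hχ hd (norm_mul_ofReal_lt_one hw hr)]
  exact tsum_congr fun m => by ring

end Periodic

lemma HasAbelSum.const_mul {a : ℕ → ℂ} {S : ℂ} (ha : HasAbelSum a S) (c : ℂ) :
    HasAbelSum (fun m => c * a m) (c * S) := by
  unfold HasAbelSum at *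
  simpa only [mul_assoc, tsum_mul_left] using ha.const_mul c

lemma HasAbelSum.finsetSum {ι : Type*} (s : Finset ι) {a : ι → ℕ → ℂ} {S : ι → ℂ}
    (hsum : ∀ i ∈ s, ∀ r ∈ Set.Ioo (0 : ℝ) 1, Summable fun m => a i m * (r : ℂ) ^ m)
    (ha : ∀ i ∈ s, HasAbelSum (a i) (S i)) :
    HasAbelSum (fun m => ∑ i ∈ s, a i m) (∑ i ∈ s, S i) := by
  refine (tendsto_finsetSum s ha).congr' ?_
  filter_upwards [Ioo_mem_nhdsLT zero_lt_one] with r hr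
  simp only [sum_mul]
  exact (Summable.tsum_finsetSum fun i hi => hsum i hi r hr).symm

lemma pow_ne_neg_one_of_norm_lt_one {q : ℂ} (hq : ‖q‖ < 1) (j : ℕ) : q ^ j ≠ -1 := by
  rcases j.eq_zero_or_pos with rfl | hj
  · norm_num
  · intro h
    simpa [← norm_pow, h] using pow_lt_one₀ (norm_nonneg q) hq hj.ne'

theorem q_euler_h1_series_eq_general (q : ℂ) (hq : ‖q‖ < 1) (h : ℕ)
    (d : ℕ) (hd : Odd d) (χ : ℕ → ℂ) (hχ : ∀ m, χ (m + d) = χ m) (x n : ℕ) :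
    HasAbelSum
      (fun m => 2 * χ m * q ^ ((h - 1) * m) * (-1 : ℂ) ^ m *
        ((1 - q ^ (m + x)) / (1 - q)) ^ n)
      ((2 / (1 - q) ^ n) * ∑ a ∈ Finset.range d, χ a * (-1 : ℂ) ^ a *
        ∑ l ∈ Finset.range (n + 1),
          (n.choose l : ℂ) * (-1 : ℂ) ^ l * q ^ (l * (x + a) + (h - 1) * a) /
            (1 + q ^ ((h - 1) * d + l * d))) := by
  set c : ℕ → ℂ := fun l => 2 * n.choose l * (-1) ^ l * q ^ (l * x) / (1 - q) ^ n
  set w : ℕ → ℂ := fun l => -q ^ (h - 1 + l) with hw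
  have hexpand : (fun m => 2 * χ m * q ^ ((h - 1) * m) * (-1 : ℂ) ^ m *
      ((1 - q ^ (m + x)) / (1 - q)) ^ n) =
        fun m => ∑ l ∈ range (n + 1), c l * (χ m * w l ^ m) := by
    funext m
    rw [div_pow, sub_eq_neg_add, add_pow, sum_div, mul_sum]
    refine sum_congr rfl fun l _ => ?_
    rw [neg_pow (q ^ (m + x)), neg_pow (q ^ (h - 1 + l))]
    ring
  have hw1 (l : ℕ) : ‖w l‖ ≤ 1 := by
    simpa [hw] using pow_le_one₀ (norm_nonneg q) hq.le
  have hwd (l : ℕ) : w l ^ d ≠ 1 := by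
    rw [hw, hd.neg_pow, Ne, neg_eq_iff_eq_neg, ← pow_mul]
    exact pow_ne_neg_one_of_norm_lt_one hq _
  rw [hexpand]
  convert HasAbelSum.finsetSum (range (n + 1)) (fun l _ r hr => ?_)
    (fun l _ => (hasAbelSum_periodic_mul_pow hχ hd.pos (hw1 l) (hwd l)).const_mul (c l)) using 1
  · simp only [mul_sum, sum_div]
    rw [sum_comm]
    refine sum_congr rfl fun l _ => sum_congr rfl fun a _ => ?_
    rw [hd.neg_pow, neg_pow (q ^ (h - 1 + l)), sub_neg_eq_add, ← pow_mul, ← pow_mul,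
      show (h - 1) * d + l * d = (h - 1 + l) * d by ring,
      show l * (x + a) + (h - 1) * a = l * x + (h - 1 + l) * a by ring, pow_add q (l * x)]
    ring
  · simpa only [mul_assoc, mul_pow] using
      (summable_periodic_mul_pow hχ hd.pos (norm_mul_ofReal_lt_one (hw1 l) hr)).mul_left (c l)

/-- The `k = 1` case (equation (22)): for `|q| < 1`, `h ≥ 1`, `d` odd, `χ` `d`-periodic,
`E_{n,χ,q}^{(h,1)}(x) = 2 ∑_m χ(m) q^{(h−1)m} (−1)^m [m+x]_q^n`
Abel-sums to
`(2/(1−q)^n) ∑_{a<d} χ(a)(−1)^a ∑_{l≤n} C(n,l)(−1)^l q^{l(x+a)+(h−1)a}/(1+q^{(h−1)d+ld})`. -/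
theorem q_euler_h1_series_eq (q : ℂ) (hq : ‖q‖ < 1) (h : ℕ) (hh : 1 ≤ h)
    (d : ℕ) (hd : Odd d) (hd0 : 0 < d) (χ : ℕ → ℂ) (hχ : ∀ m, χ (m + d) = χ m) (x n : ℕ) :
    HasAbelSum
      (fun m => 2 * χ m * q ^ ((h - 1) * m) * (-1 : ℂ) ^ m *
        ((1 - q ^ (m + x)) / (1 - q)) ^ n)
      ((2 / (1 - q) ^ n) * ∑ a ∈ Finset.range d, χ a * (-1 : ℂ) ^ a *
        ∑ l ∈ Finset.range (n + 1),
          (n.choose l : ℂ) * (-1 : ℂ) ^ l * q ^ (l * (x + a) + (h - 1) * a) /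
            (1 + q ^ ((h - 1) * d + l * d))) :=
  q_euler_h1_series_eq_general q hq h d hd χ hχ x n
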